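/- arXiv:1901.03930 — 6 statements merged into one kernel-verified Lean document; each statement's English description precedes it below -/
import Mathlib

section
/- Let $K_e \in \mathbb{R}^{n_x \times n_x}$, and for each $k \in \mathbb{N}$ let $g_k \in \mathbb{R}^{n_x \times n_\theta}$ (the regressor $g(x_k,u_k)$), and let $\theta^*, \hat{\theta}_k \in \mathbb{R}^{n_\theta}$ with estimation error $\tilde{\theta}_k = \theta^* - \hat{\theta}_k$. Suppose the filter satisfies $w_{k+1} = g_k - K_e w_k$, the true state satisfies $x_{k+1} = A_0 x_k + B_0 u_k + g_k \theta^*$, the state estimator satisfies $\hat{x}_{k+1} = A_0 x_k + B_0 u_k + g_k \hat{\theta}_{k+1} + K_e \tilde{x}_k + K_e w_k (\hat{\theta}_k - \hat{\theta}_{k+1})$ where $\tilde{x}_k = x_k - \hat{x}_k$, and define $\eta_k = \tilde{x}_k - w_k \tilde{\theta}_k$. Then for every $k$, $\eta_{k+1} = -K_e \eta_k$. -/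
open Matrix

/-- The auxiliary variable `η_k = x̃_k - w_k θ̃_k` satisfies the implicit
regression dynamics `η_{k+1} = -K_e η_k`. -/
theorem eta_dynamics
    {nx nu nθ : ℕ}
    (Ke : Matrix (Fin nx) (Fin nx) ℝ)
    (A0 : Matrix (Fin nx) (Fin nx) ℝ)
    (B0 : Matrix (Fin nx) (Fin nu) ℝ)
    (g : ℕ → Matrix (Fin nx) (Fin nθ) ℝ)
    (w : ℕ → Matrix (Fin nx) (Fin nθ) ℝ)
    (x xhat : ℕ → Fin nx → ℝ)
    (u : ℕ → Fin nu → ℝ)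
    (θstar : Fin nθ → ℝ)
    (θhat : ℕ → Fin nθ → ℝ)
    (xtilde : ℕ → Fin nx → ℝ)
    (θtilde : ℕ → Fin nθ → ℝ)
    (η : ℕ → Fin nx → ℝ)
    (hxtilde : ∀ k, xtilde k = x k - xhat k)
    (hθtilde : ∀ k, θtilde k = θstar - θhat k)
    (hw : ∀ k, w (k + 1) = g k - Ke * w k)
    (hx : ∀ k, x (k + 1) =
      A0.mulVec (x k) + B0.mulVec (u k) + (g k).mulVec θstar)
    (hxhat : ∀ k, xhat (k + 1) =
      A0.mulVec (x k) + B0.mulVec (u k) + (g k).mulVec (θhat (k + 1))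
        + Ke.mulVec (xtilde k) + (Ke * w k).mulVec (θhat k - θhat (k + 1)))
    (hη : ∀ k, η k = xtilde k - (w k).mulVec (θtilde k)) :
    ∀ k, η (k + 1) = -(Ke.mulVec (η k)) := by
  intro k
  simp only [hη, hxtilde (k+1), hθtilde, hx, hxhat, hw, Matrix.sub_mulVec,
    Matrix.mulVec_sub, Matrix.mulVec_add, ← Matrix.mulVec_mulVec, Matrix.mulVec_neg]
  module
end

section
/- Let $\lambda \in (0,1]$, let $\Gamma_k \in \mathbb{R}^{n_\theta \times n_\theta}$ be symmetric positive definite, $w_k \in \mathbb{R}^{n_x \times n_\theta}$, and set $\Gamma_{k+1} = \lambda \Gamma_k + w_k^\top w_k$. Suppose $\tilde{\theta}_{k+1} = \lambda \Gamma_{k+1}^{-1} \Gamma_k \tilde{\theta}_k$ for some $\tilde{\theta}_k \in \mathbb{R}^{n_\theta}$. Then the Lyapunov function of the estimation error is non-increasing with rate $\lambda$: $\tilde{\theta}_{k+1}^\top \Gamma_{k+1} \tilde{\theta}_{k+1} \leq \lambda\, \tilde{\theta}_k^\top \Gamma_k \tilde{\theta}_k$. -/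
/-!
Write `u = θ̃ₖ`, `v = θ̃ₖ₊₁`, `Γ = Γₖ`. The update says exactly `Γₖ₊₁ v = λ Γ u`, so the new
Lyapunov value is `vᵀ Γₖ₊₁ v = λ uᵀ Γ v`. Since `Γₖ₊₁ = λ Γ + wᵀw ⪰ λ Γ`, the same identity gives
`vᵀ Γ v ≤ uᵀ Γ v`, and positivity of `(u - v)ᵀ Γ (u - v)` gives `2 uᵀ Γ v ≤ uᵀ Γ u + vᵀ Γ v`.
Together `uᵀ Γ v ≤ uᵀ Γ u`.
-/

open Matrix

namespace Matrix

variable {n R : Type*} [Fintype n]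

theorem IsSymm.dotProduct_mulVec_comm [CommSemiring R] {M : Matrix n n R} (hM : M.IsSymm)
    (u v : n → R) : u ⬝ᵥ M *ᵥ v = v ⬝ᵥ M *ᵥ u := by
  rw [dotProduct_mulVec, ← mulVec_transpose, hM.eq, dotProduct_comm]

variable [CommRing R] [LinearOrder R] [IsStrictOrderedRing R] [StarRing R] [TrivialStar R]

theorem PosSemidef.two_mul_dotProduct_mulVec_le {M : Matrix n n R} (hM : M.PosSemidef)
    (u v : n → R) : 2 * (u ⬝ᵥ M *ᵥ v) ≤ u ⬝ᵥ M *ᵥ u + v ⬝ᵥ M *ᵥ v := by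
  have hdiff := hM.dotProduct_mulVec_nonneg (u - v)
  have hcomm := (isHermitian_iff_isSymm.mp hM.isHermitian).dotProduct_mulVec_comm u v
  simp only [star_trivial, mulVec_sub, sub_dotProduct, dotProduct_sub] at hdiff
  linarith

theorem PosSemidef.dotProduct_smul_add_mulVec_le {Γ W : Matrix n n R} (hΓ : Γ.PosSemidef)
    (hW : W.PosSemidef) {lam : R} (hlam : 0 ≤ lam) {u v : n → R}
    (hv : (lam • Γ + W) *ᵥ v = lam • Γ *ᵥ u) :
    v ⬝ᵥ (lam • Γ + W) *ᵥ v ≤ lam * (u ⬝ᵥ Γ *ᵥ u) := by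
  have hnew : v ⬝ᵥ (lam • Γ + W) *ᵥ v = lam * (u ⬝ᵥ Γ *ᵥ v) := by
    rw [hv, dotProduct_smul, smul_eq_mul,
      (isHermitian_iff_isSymm.mp hΓ.isHermitian).dotProduct_mulVec_comm]
  have hsplit : v ⬝ᵥ (lam • Γ + W) *ᵥ v = lam * (v ⬝ᵥ Γ *ᵥ v) + v ⬝ᵥ W *ᵥ v := by
    rw [add_mulVec, dotProduct_add, smul_mulVec, dotProduct_smul, smul_eq_mul]
  have hW_nonneg : 0 ≤ v ⬝ᵥ W *ᵥ v := by simpa using hW.dotProduct_mulVec_nonneg v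
  have hcross := mul_le_mul_of_nonneg_left (hΓ.two_mul_dotProduct_mulVec_le u v) hlam
  linarith

end Matrix

theorem rls_lyapunov_decrease_general
    {nx nθ : ℕ}
    (lam : ℝ) (hlam0 : 0 < lam)
    (Γk Γk1 : Matrix (Fin nθ) (Fin nθ) ℝ)
    (hΓk_pd : Γk.PosDef)
    (wk : Matrix (Fin nx) (Fin nθ) ℝ)
    (hΓk1 : Γk1 = lam • Γk + wkᵀ * wk)
    (θtildek θtildek1 : Fin nθ → ℝ)
    (hupd : θtildek1 = lam • (Γk1⁻¹ * Γk).mulVec θtildek) :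
    θtildek1 ⬝ᵥ Γk1.mulVec θtildek1 ≤ lam * (θtildek ⬝ᵥ Γk.mulVec θtildek) := by
  have hw : (wkᵀ * wk).PosSemidef := by simpa using posSemidef_conjTranspose_mul_self wk
  have hΓk1_pd : Γk1.PosDef := hΓk1 ▸ (hΓk_pd.smul hlam0).add_posSemidef hw
  have hstep : Γk1 *ᵥ θtildek1 = lam • Γk *ᵥ θtildek := by
    rw [hupd, mulVec_smul, mulVec_mulVec, ← Matrix.mul_assoc,
      mul_nonsing_inv _ (isUnit_iff_ne_zero.mpr hΓk1_pd.det_pos.ne'), Matrix.one_mul]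
  subst hΓk1
  exact hΓk_pd.posSemidef.dotProduct_smul_add_mulVec_le hw hlam0.le hstep

/-- The Lyapunov function `θ̃ᵀ Γ θ̃` of the RLS estimation error is
non-increasing with rate `λ`. -/
theorem rls_lyapunov_decrease
    {nx nθ : ℕ}
    (lam : ℝ) (hlam0 : 0 < lam) (hlam1 : lam ≤ 1)
    (Γk Γk1 : Matrix (Fin nθ) (Fin nθ) ℝ)
    (hΓk_symm : Γk.IsSymm) (hΓk_pd : Γk.PosDef)
    (wk : Matrix (Fin nx) (Fin nθ) ℝ)
    (hΓk1 : Γk1 = lam • Γk + wkᵀ * wk)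
    (θtildek θtildek1 : Fin nθ → ℝ)
    (hupd : θtildek1 = lam • (Γk1⁻¹ * Γk).mulVec θtildek) :
    θtildek1 ⬝ᵥ Γk1.mulVec θtildek1 ≤ lam * (θtildek ⬝ᵥ Γk.mulVec θtildek) :=
  rls_lyapunov_decrease_general lam hlam0 Γk Γk1 hΓk_pd wk hΓk1 θtildek θtildek1 hupd
end

section
/- (Lemma 1) Let $\lambda \in (0,1)$, $\beta > 0$, $r_0 > 0$, and $\theta^* \in \mathbb{R}^{n_\theta}$ with $\|\theta^*\| \leq r_0$. Let $\hat{\theta}_0 = 0$, $\Gamma_0 = \beta I_{n_\theta}$, and for each $k$ let $w_k \in \mathbb{R}^{n_x \times n_\theta}$ be arbitrary and set $\Gamma_{k+1} = \lambda \Gamma_k + w_k^\top w_k$ and $\hat{\theta}_{k+1} = \hat{\theta}_k + \Gamma_{k+1}^{-1} w_k^\top w_k (\theta^* - \hat{\theta}_k)$. Define the error bound $\mathcal{V}_k = \lambda^k \beta r_0^2$, the ellipsoidal set $\hat{\Theta}_k = \{\theta \in \mathbb{R}^{n_\theta} : (\theta - \hat{\theta}_k)^\top \Gamma_k (\theta -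 \hat{\theta}_k) \leq \mathcal{V}_k\}$, and the estimated uncertainty sets $\Theta_0 = \hat{\Theta}_0$ and $\Theta_k = \Theta_{k-1} \cap \hat{\Theta}_k$ for $k \geq 1$. Then $\theta^* \in \Theta_k$ for all $k \geq 0$. -/
/-!
With `e_k = θ* - θ̂_k`, the update gives `Γ_{k+1} e_{k+1} = λ Γ_k e_k`. Comparing the two
expressions `e_{k+1}ᵀ Γ_{k+1} e_{k+1} = λ e_{k+1}ᵀ Γ_k e_k = λ e_{k+1}ᵀ Γ_k e_{k+1} + ‖w_k e_{k+1}‖²`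
with `(e_k - e_{k+1})ᵀ Γ_k (e_k - e_{k+1}) ≥ 0` shows that the `Γ_k`-energy of the error
contracts by `λ` at each step. It starts at `β ‖θ*‖² ≤ β r₀² = 𝒱₀`, so `θ*` lies in every `Θ̂_k`,
hence in every `Θ_k`.
-/

open Matrix

lemma Matrix.IsHermitian.dotProduct_mulVec_comm {n : Type*} [Fintype n] {A : Matrix n n ℝ}
    (hA : A.IsHermitian) (u v : n → ℝ) : u ⬝ᵥ A *ᵥ v = v ⬝ᵥ A *ᵥ u := by
  have hAt : Aᵀ = A := by simpa [conjTranspose_eq_transpose_of_trivial] using hA.eq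
  rw [dotProduct_mulVec, ← mulVec_transpose, hAt, dotProduct_comm]

theorem Matrix.PosSemidef.dotProduct_mulVec_le_of_mulVec_eq {n : Type*} [Fintype n]
    {A B : Matrix n n ℝ} (hA : A.PosSemidef) (hB : B.PosSemidef) {lam : ℝ} (hlam : 0 < lam)
    {e u : n → ℝ} (h : (lam • A + B) *ᵥ u = lam • (A *ᵥ e)) :
    u ⬝ᵥ (lam • A + B) *ᵥ u ≤ lam * (e ⬝ᵥ A *ᵥ e) := by
  have hBu : 0 ≤ u ⬝ᵥ B *ᵥ u := by simpa using hB.dotProduct_mulVec_nonneg u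
  have hdiff : 0 ≤ (e - u) ⬝ᵥ A *ᵥ (e - u) := by simpa using hA.dotProduct_mulVec_nonneg (e - u)
  have hexpand : (e - u) ⬝ᵥ A *ᵥ (e - u) =
      e ⬝ᵥ A *ᵥ e - 2 * (u ⬝ᵥ A *ᵥ e) + u ⬝ᵥ A *ᵥ u := by
    simp only [mulVec_sub, dotProduct_sub, sub_dotProduct,
      hA.isHermitian.dotProduct_mulVec_comm e u]
    ring
  have hsplit : u ⬝ᵥ (lam • A + B) *ᵥ u = lam * (u ⬝ᵥ A *ᵥ u) + u ⬝ᵥ B *ᵥ u := by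
    rw [add_mulVec, smul_mulVec, dotProduct_add, dotProduct_smul, smul_eq_mul]
  have hcross : u ⬝ᵥ (lam • A + B) *ᵥ u = lam * (u ⬝ᵥ A *ᵥ e) := by
    rw [h, dotProduct_smul, smul_eq_mul]
  -- `λ u·Au ≤ λ u·Ae` from the two expressions, then `2 u·Ae ≤ e·Ae + u·Au ≤ e·Ae + u·Ae`.
  have hau : u ⬝ᵥ A *ᵥ u ≤ u ⬝ᵥ A *ᵥ e := by nlinarith
  rw [hcross]
  exact mul_le_mul_of_nonneg_left (by linarith) hlam.le

lemma dotProduct_self_eq_norm_sq {n : Type*} [Fintype n] (θ : n → ℝ) :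
    θ ⬝ᵥ θ = ‖(EuclideanSpace.equiv n ℝ).symm θ‖ ^ 2 := by
  rw [← real_inner_self_eq_norm_sq, EuclideanSpace.inner_eq_star_dotProduct]
  simp

section RecursiveLeastSquares

variable {m n : Type*} [Fintype m] [Fintype n] {lam : ℝ}
  {w : ℕ → Matrix m n ℝ} {Γ : ℕ → Matrix n n ℝ}

lemma posDef_of_forgetting_recursion (hlam : 0 < lam) (hΓ0 : (Γ 0).PosDef)
    (hΓ : ∀ k, Γ (k + 1) = lam • Γ k + (w k)ᵀ * w k) : ∀ k, (Γ k).PosDef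
  | 0 => hΓ0
  | k + 1 => hΓ k ▸ ((posDef_of_forgetting_recursion hlam hΓ0 hΓ k).smul hlam).add_posSemidef
      (by simpa using posSemidef_conjTranspose_mul_self (w k))

theorem error_energy_le_of_forgetting_recursion [DecidableEq n] (hlam : 0 < lam) (hΓ0 : (Γ 0).PosDef)
    (hΓ : ∀ k, Γ (k + 1) = lam • Γ k + (w k)ᵀ * w k)
    {θstar : n → ℝ} {θhat : ℕ → n → ℝ}
    (hθhat : ∀ k, θhat (k + 1) =
      θhat k + (Γ (k + 1))⁻¹ *ᵥ ((w k)ᵀ *ᵥ (w k *ᵥ (θstar - θhat k)))) (k : ℕ) :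
    (θstar - θhat k) ⬝ᵥ Γ k *ᵥ (θstar - θhat k) ≤
      lam ^ k * ((θstar - θhat 0) ⬝ᵥ Γ 0 *ᵥ (θstar - θhat 0)) := by
  have hPD := posDef_of_forgetting_recursion hlam hΓ0 hΓ
  induction k with
  | zero => simp
  | succ k ih =>
    have hstep : Γ (k + 1) *ᵥ (θstar - θhat (k + 1)) = lam • (Γ k *ᵥ (θstar - θhat k)) := by
      have hinv : Γ (k + 1) * (Γ (k + 1))⁻¹ = 1 :=
        mul_nonsing_inv _ (hPD (k + 1)).det_pos.ne'.isUnit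
      rw [hθhat k, sub_add_eq_sub_sub, mulVec_sub, mulVec_mulVec, hinv, one_mulVec,
        mulVec_mulVec, ← sub_mulVec, hΓ k, add_sub_cancel_right, smul_mulVec]
    rw [hΓ k] at hstep ⊢
    calc _ ≤ lam * ((θstar - θhat k) ⬝ᵥ Γ k *ᵥ (θstar - θhat k)) :=
          (hPD k).posSemidef.dotProduct_mulVec_le_of_mulVec_eq
            (by simpa using posSemidef_conjTranspose_mul_self (w k)) hlam hstep
      _ ≤ lam * (lam ^ k * ((θstar - θhat 0) ⬝ᵥ Γ 0 *ᵥ (θstar - θhat 0))) := by gcongr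
      _ = _ := by ring

end RecursiveLeastSquares

theorem true_parameter_in_uncertainty_set_general
    {nx nθ : ℕ}
    (lam β r0 : ℝ) (hlam0 : 0 < lam) (hβ : 0 < β)
    (θstar : Fin nθ → ℝ)
    (hθstar : ‖(EuclideanSpace.equiv (Fin nθ) ℝ).symm θstar‖ ≤ r0)
    (w : ℕ → Matrix (Fin nx) (Fin nθ) ℝ)
    (θhat : ℕ → Fin nθ → ℝ)
    (Γ : ℕ → Matrix (Fin nθ) (Fin nθ) ℝ)
    (hθhat0 : θhat 0 = 0)
    (hΓ0 : Γ 0 = β • (1 : Matrix (Fin nθ) (Fin nθ) ℝ))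
    (hΓ : ∀ k, Γ (k + 1) = lam • Γ k + (w k)ᵀ * w k)
    (hθhat : ∀ k, θhat (k + 1) =
      θhat k + (Γ (k + 1))⁻¹.mulVec ((w k)ᵀ.mulVec ((w k).mulVec (θstar - θhat k))))
    (𝒱 : ℕ → ℝ) (h𝒱 : ∀ k, 𝒱 k = lam ^ k * β * r0 ^ 2)
    (Θhat : ℕ → Set (Fin nθ → ℝ))
    (hΘhat : ∀ k, Θhat k =
      {θ | (θ - θhat k) ⬝ᵥ (Γ k).mulVec (θ - θhat k) ≤ 𝒱 k})
    (Θ : ℕ → Set (Fin nθ → ℝ))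
    (hΘ0 : Θ 0 = Θhat 0)
    (hΘ : ∀ k, Θ (k + 1) = Θ k ∩ Θhat (k + 1)) :
    ∀ k, θstar ∈ Θ k := by
  have hΓ0PD : (Γ 0).PosDef := hΓ0 ▸ PosDef.one.smul hβ
  have hinit : (θstar - θhat 0) ⬝ᵥ Γ 0 *ᵥ (θstar - θhat 0) ≤ β * r0 ^ 2 := by
    rw [hθhat0, sub_zero, hΓ0, smul_mulVec, one_mulVec, dotProduct_smul, smul_eq_mul,
      dotProduct_self_eq_norm_sq]
    gcongr
  have hmem (k : ℕ) : θstar ∈ Θhat k := by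
    rw [hΘhat, Set.mem_ofPred_eq, h𝒱, mul_assoc]
    exact (error_energy_le_of_forgetting_recursion hlam0 hΓ0PD hΓ hθhat k).trans (by gcongr)
  intro k
  induction k with
  | zero => exact hΘ0 ▸ hmem 0
  | succ k ih => exact hΘ k ▸ ⟨ih, hmem (k + 1)⟩

/-- Lemma 1: the true parameter `θ*` belongs to the estimated uncertainty set
`Θ_k` for all `k ≥ 0`. -/
theorem true_parameter_in_uncertainty_set
    {nx nθ : ℕ}
    (lam β r0 : ℝ) (hlam0 : 0 < lam) (hlam1 : lam < 1) (hβ : 0 < β) (hr0 : 0 < r0)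
    (θstar : Fin nθ → ℝ)
    (hθstar : ‖(EuclideanSpace.equiv (Fin nθ) ℝ).symm θstar‖ ≤ r0)
    (w : ℕ → Matrix (Fin nx) (Fin nθ) ℝ)
    (θhat : ℕ → Fin nθ → ℝ)
    (Γ : ℕ → Matrix (Fin nθ) (Fin nθ) ℝ)
    (hθhat0 : θhat 0 = 0)
    (hΓ0 : Γ 0 = β • (1 : Matrix (Fin nθ) (Fin nθ) ℝ))
    (hΓ : ∀ k, Γ (k + 1) = lam • Γ k + (w k)ᵀ * w k)
    (hθhat : ∀ k, θhat (k + 1) =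
      θhat k + (Γ (k + 1))⁻¹.mulVec ((w k)ᵀ.mulVec ((w k).mulVec (θstar - θhat k))))
    (𝒱 : ℕ → ℝ) (h𝒱 : ∀ k, 𝒱 k = lam ^ k * β * r0 ^ 2)
    (Θhat : ℕ → Set (Fin nθ → ℝ))
    (hΘhat : ∀ k, Θhat k =
      {θ | (θ - θhat k) ⬝ᵥ (Γ k).mulVec (θ - θhat k) ≤ 𝒱 k})
    (Θ : ℕ → Set (Fin nθ → ℝ))
    (hΘ0 : Θ 0 = Θhat 0)
    (hΘ : ∀ k, Θ (k + 1) = Θ k ∩ Θhat (k + 1)) :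
    ∀ k, θstar ∈ Θ k :=
  true_parameter_in_uncertainty_set_general lam β r0 hlam0 hβ θstar hθstar w θhat Γ hθhat0 hΓ0 hΓ
    hθhat 𝒱 h𝒱 Θhat hΘhat Θ hΘ0 hΘ
end

section
/- (Proposition 1, constraint satisfaction part) Let $F \in \mathbb{R}^{m \times n_x}$, $G \in \mathbb{R}^{m \times n_u}$, $K \in \mathbb{R}^{n_u \times n_x}$, $V \in \mathbb{R}^{n_v \times n_x}$, and let $H \in \mathbb{R}^{m \times n_v}$ be entrywise nonnegative with $HV = F + GK$. Let $z \in \mathbb{R}^{n_x}$, $v \in \mathbb{R}^{n_u}$, $\alpha \in \mathbb{R}^{n_v}$ satisfy the tightened constraint $H\alpha + (F+GK)z + Gv \leq \mathbf{1}$ (componentwise). Then for every $e \in \mathbb{R}^{n_x}$ with $Ve \leq \alpha$ (componentwise), the state $x = z + e$ and input $u = Kx + v$ satisfy the mixed constraint $Fx + Gu \leq \mathbf{1}$. -/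
open Matrix

/-- Proposition 1 (constraint satisfaction part): if the tightened constraint
`Hα + (F+GK)z + Gv ≤ 1` holds, then every state `x = z + e` with `Ve ≤ α`
together with the input `u = Kx + v` satisfies the mixed constraint
`Fx + Gu ≤ 1`. -/
theorem tube_constraint_satisfaction
    {m nx nu nv : ℕ}
    (F : Matrix (Fin m) (Fin nx) ℝ)
    (G : Matrix (Fin m) (Fin nu) ℝ)
    (K : Matrix (Fin nu) (Fin nx) ℝ)
    (V : Matrix (Fin nv) (Fin nx) ℝ)
    (H : Matrix (Fin m) (Fin nv) ℝ)
    (hH_nonneg : ∀ i j, 0 ≤ H i j)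
    (hHV : H * V = F + G * K)
    (z : Fin nx → ℝ) (v : Fin nu → ℝ) (α : Fin nv → ℝ)
    (hcon : H.mulVec α + (F + G * K).mulVec z + G.mulVec v ≤ 1) :
    ∀ e : Fin nx → ℝ, V.mulVec e ≤ α →
      F.mulVec (z + e) + G.mulVec (K.mulVec (z + e) + v) ≤ 1 := by
  intro e he i
  have key : H.mulVec (V.mulVec e) i ≤ H.mulVec α i := by
    simp only [mulVec, dotProduct]
    exact Finset.sum_le_sum fun j _ =>
      mul_le_mul_of_nonneg_left (he j) (hH_nonneg i j)
  have h1 : F.mulVec (z + e) + G.mulVec (K.mulVec (z + e) + v)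
      = (F + G * K).mulVec z + (H * V).mulVec e + G.mulVec v := by
    rw [hHV]
    simp [Matrix.mulVec_add, Matrix.add_mulVec, Matrix.mulVec_mulVec]
    abel
  rw [h1]
  have := hcon i
  simp only [Pi.add_apply, Pi.one_apply] at this ⊢
  have h2 : (H * V).mulVec e i = H.mulVec (V.mulVec e) i := by
    rw [← Matrix.mulVec_mulVec]
  linarith
end

section
/- (Proposition 1, tube invariance part) Let $V \in \mathbb{R}^{n_v \times n_x}$. Let $\phi^j \in \mathbb{R}^{n_x \times n_x}$ and $B^j \in \mathbb{R}^{n_x \times n_u}$ for $j = 1, \dots, n_c$ be the vertex system matrices, and let $\mu_1, \dots, \mu_{n_c} \geq 0$ with $\sum_j \mu_j = 1$ define the true system $\phi^* = \sum_j \mu_j \phi^j$, $B^* = \sum_j \mu_j B^j$. Let $\hat{\phi} \in \mathbb{R}^{n_x \times n_x}$, $\hat{B} \in \mathbb{R}^{n_x \times n_u}$ be the nominal matrices. Suppose that for each $j$ there exists an entrywise nonnegative matrix $H^j \in \mathbb{R}^{n_v \times n_v}$ with $H^j V = V \phi^j$. Let $e, z \in \mathbb{R}^{n_x}$, $v \in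 \mathbb{R}^{n_u}$, $\alpha, \alpha' \in \mathbb{R}^{n_v}$ satisfy $Ve \leq \alpha$ and, for every $j$, $\alpha' \geq H^j \alpha + V\big((\phi^j - \hat{\phi})z + (B^j - \hat{B})v\big)$ (componentwise). Then the propagated error $e' = \phi^* e + (\phi^* - \hat{\phi})z + (B^* - \hat{B})v$ satisfies $Ve' \leq \alpha'$. -/
/-!
Each vertex system maps the tube cross section `S = {Ve ≤ α}` into `S'`: since `HʲV = Vφʲ` with
`Hʲ ≥ 0`, we get `Vφʲe = HʲVe ≤ Hʲα`, and the recursion for `α'` absorbs the remaining terms. The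
propagated error is affine in `(φ*, B*)`, so for the convex combination it is the same convex
combination of the vertex errors, and `S'` is convex.
-/

open Matrix Finset

namespace Matrix

variable {m n R : Type*} [Fintype n]

lemma mulVec_le_mulVec_of_nonneg [Semiring R] [PartialOrder R] [IsOrderedRing R]
    {H : Matrix m n R} (hH : ∀ i l, 0 ≤ H i l) {x y : n → R} (hxy : x ≤ y) :
    H *ᵥ x ≤ H *ᵥ y :=
  fun i => dotProduct_le_dotProduct_of_nonneg_left hxy (hH i)

lemma mulVec_mulVec_le_of_mul_eq_mul [CommSemiring R] [PartialOrder R] [IsOrderedRing R]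
    {V : Matrix m n R} {A : Matrix n n R} {H : Matrix m m R} [Fintype m]
    (hH : ∀ i l, 0 ≤ H i l) (hHV : H * V = V * A) {e : n → R} {α : m → R} (he : V *ᵥ e ≤ α) :
    V *ᵥ (A *ᵥ e) ≤ H *ᵥ α := by
  rw [mulVec_mulVec, ← hHV, ← mulVec_mulVec]
  exact mulVec_le_mulVec_of_nonneg hH he

end Matrix

lemma Finset.sum_smul_sub_of_sum_eq_one {ι R M : Type*} [Ring R] [AddCommGroup M] [Module R M]
    (s : Finset ι) {μ : ι → R} (hμ : ∑ j ∈ s, μ j = 1) (x : ι → M) (c : M) :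
    (∑ j ∈ s, μ j • x j) - c = ∑ j ∈ s, μ j • (x j - c) := by
  simp only [smul_sub, sum_sub_distrib, ← sum_smul, hμ, one_smul]

/-- Proposition 1 (tube invariance part): if `Ve ≤ α` and the tube recursion
`α' ≥ Hʲα + V((φʲ - φ̂)z + (Bʲ - B̂)v)` holds for every vertex `j`, then the
propagated error `e' = φ* e + (φ* - φ̂)z + (B* - B̂)v` satisfies `Ve' ≤ α'`,
where `(φ*, B*)` is any convex combination of the vertices. -/
theorem tube_invariance
    {nx nu nv nc : ℕ}
    (V : Matrix (Fin nv) (Fin nx) ℝ)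
    (φ : Fin nc → Matrix (Fin nx) (Fin nx) ℝ)
    (B : Fin nc → Matrix (Fin nx) (Fin nu) ℝ)
    (μ : Fin nc → ℝ)
    (hμ_nonneg : ∀ j, 0 ≤ μ j)
    (hμ_sum : ∑ j, μ j = 1)
    (φstar : Matrix (Fin nx) (Fin nx) ℝ)
    (Bstar : Matrix (Fin nx) (Fin nu) ℝ)
    (hφstar : φstar = ∑ j, μ j • φ j)
    (hBstar : Bstar = ∑ j, μ j • B j)
    (φhat : Matrix (Fin nx) (Fin nx) ℝ)
    (Bhat : Matrix (Fin nx) (Fin nu) ℝ)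
    (H : Fin nc → Matrix (Fin nv) (Fin nv) ℝ)
    (hH_nonneg : ∀ j i l, 0 ≤ H j i l)
    (hHV : ∀ j, H j * V = V * φ j)
    (e z : Fin nx → ℝ) (v : Fin nu → ℝ) (α α' : Fin nv → ℝ)
    (he : V.mulVec e ≤ α)
    (hα' : ∀ j, (H j).mulVec α +
      V.mulVec ((φ j - φhat).mulVec z + (B j - Bhat).mulVec v) ≤ α') :
    V.mulVec (φstar.mulVec e + (φstar - φhat).mulVec z
      + (Bstar - Bhat).mulVec v) ≤ α' := by
  have hvertex : ∀ j, V *ᵥ (φ j *ᵥ e + (φ j - φhat) *ᵥ z + (B j - Bhat) *ᵥ v) ≤ α' := fun j =>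
    calc _ = V *ᵥ (φ j *ᵥ e) + V *ᵥ ((φ j - φhat) *ᵥ z + (B j - Bhat) *ᵥ v) := by
          rw [add_assoc, mulVec_add]
      _ ≤ H j *ᵥ α + V *ᵥ ((φ j - φhat) *ᵥ z + (B j - Bhat) *ᵥ v) :=
          add_le_add_left (mulVec_mulVec_le_of_mul_eq_mul (hH_nonneg j) (hHV j) he) _
      _ ≤ α' := hα' j
  have hcombination : φstar *ᵥ e + (φstar - φhat) *ᵥ z + (Bstar - Bhat) *ᵥ v
      = ∑ j, μ j • (φ j *ᵥ e + (φ j - φhat) *ᵥ z + (B j - Bhat) *ᵥ v) := by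
    simp only [hφstar, hBstar, sum_smul_sub_of_sum_eq_one _ hμ_sum, sum_mulVec, smul_mulVec,
      smul_add, sum_add_distrib]
  rw [hcombination, mulVec_sum]
  simp only [mulVec_smul]
  exact (convex_Iic α').sum_mem (fun j _ => hμ_nonneg j) hμ_sum fun j _ => hvertex j
end

section
/- (Proposition 2, invariance of the terminal set for the tube parameter) Let $V \in \mathbb{R}^{n_v \times n_x}$, let $\phi^j \in \mathbb{R}^{n_x \times n_x}$ for $j=1,\dots,n_c$, let $\mu_1,\dots,\mu_{n_c} \geq 0$ with $\sum_j \mu_j = 1$, and let the nominal matrix be $\hat{\phi} = \sum_j \mu_j \phi^j$. For each $j$ let $H^j \in \mathbb{R}^{n_v \times n_v}$ be entrywise nonnegative, and suppose $h := \max_j \|H^j\|_\infty < 1$. Let $Z \subseteq \mathbb{R}^{n_x}$ and $c \geq 0$ with $\|V(\phi^j - \hat{\phi})z\|_\infty \leq c$ for all $z \in Z$ and all $j$, and let $\gamma \geq c/(1-h)$. Then for every $z \in Z$ and every $\alpha \in \mathbb{R}^{n_v}$ with $0 \leq \alpha$ and $\|\alpha\|_\infty \leq \gamma$, the updated tube parameter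 $\alpha^+$ defined componentwise by $\alpha^+_i = \max_{j} \big(H^j \alpha + V(\phi^j - \hat{\phi})z\big)_i$ satisfies $0 \leq \alpha^+$ and $\|\alpha^+\|_\infty \leq \gamma$; i.e., the set $\mathcal{A} = \{\alpha : \|\alpha\|_\infty \leq \gamma,\ \alpha \geq 0\}$ is invariant for the tube-parameter dynamics. -/
open Matrix Finset

/- Matrices are equipped with the induced `L∞` operator norm
(maximum absolute row sum); vectors carry the sup (infinity) norm. -/
attribute [local instance] Matrix.linftyOpNormedAddCommGroup

/-- Proposition 2 (invariance of the terminal set for the tube parameter):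
under `h = max_j ‖Hʲ‖_∞ < 1`, `‖V(φʲ - φ̂)z‖_∞ ≤ c` on `Z`, and
`γ ≥ c/(1-h)`, the set `{α : 0 ≤ α, ‖α‖_∞ ≤ γ}` is invariant for the
tube-parameter dynamics `α⁺ᵢ = max_j (Hʲα + V(φʲ - φ̂)z)ᵢ`. -/
theorem terminal_tube_parameter_invariance
    {nx nv nc : ℕ}
    (V : Matrix (Fin nv) (Fin nx) ℝ)
    (φ : Fin nc → Matrix (Fin nx) (Fin nx) ℝ)
    (μ : Fin nc → ℝ)
    (hμ_nonneg : ∀ j, 0 ≤ μ j)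
    (hμ_sum : ∑ j, μ j = 1)
    (φhat : Matrix (Fin nx) (Fin nx) ℝ)
    (hφhat : φhat = ∑ j, μ j • φ j)
    (H : Fin nc → Matrix (Fin nv) (Fin nv) ℝ)
    (hH_nonneg : ∀ j i l, 0 ≤ H j i l)
    (h : ℝ) (hdef : h = ⨆ j, ‖H j‖) (hh : h < 1)
    (Z : Set (Fin nx → ℝ))
    (c : ℝ) (hc : 0 ≤ c)
    (hcZ : ∀ z ∈ Z, ∀ j, ‖V.mulVec ((φ j - φhat).mulVec z)‖ ≤ c)
    (γ : ℝ) (hγ : c / (1 - h) ≤ γ) :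
    ∀ z ∈ Z, ∀ α : Fin nv → ℝ, 0 ≤ α → ‖α‖ ≤ γ →
      ∀ αplus : Fin nv → ℝ,
        (∀ i, αplus i = ⨆ j, ((H j).mulVec α
          + V.mulVec ((φ j - φhat).mulVec z)) i) →
        0 ≤ αplus ∧ ‖αplus‖ ≤ γ := by

  intro z hz α hα hαγ αp hαp
  -- nc is positive
  rcases Nat.eq_zero_or_pos nc with rfl | hpos
  · simp at hμ_sum
  have hne : Nonempty (Fin nc) := Fin.pos_iff_nonempty.mp hpos
  have h1 : 0 < 1 - h := by linarith
  have hγ0 : 0 ≤ γ := le_trans (div_nonneg hc h1.le) hγ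
  have hcle : c ≤ γ * (1 - h) := by
    rw [div_le_iff₀ h1] at hγ; linarith
  set d : Fin nc → Fin nv → ℝ := fun j => V.mulVec ((φ j - φhat).mulVec z) with hd
  -- the convex combination of the perturbations vanishes
  have hm : ∑ j, μ j • (φ j - φhat) = (0 : Matrix (Fin nx) (Fin nx) ℝ) := by
    simp only [smul_sub, Finset.sum_sub_distrib, ← Finset.sum_smul, hμ_sum, one_smul, hφhat,
      sub_self]
  have hA : ∀ (M : Fin nc → Matrix (Fin nx) (Fin nx) ℝ),
      (∑ j, M j) *ᵥ z = ∑ j, (M j) *ᵥ z := by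
    intro M
    funext k
    simp only [Matrix.mulVec, dotProduct, Finset.sum_apply, Matrix.sum_apply,
      Finset.sum_mul]
    rw [Finset.sum_comm]
  have hsum : ∑ j, μ j • d j = 0 := by
    calc ∑ j, μ j • d j = ∑ j, V.mulVecLin ((μ j • (φ j - φhat)) *ᵥ z) := by
          refine Finset.sum_congr rfl fun j _ => ?_
          simp [hd, Matrix.mulVecLin_apply, Matrix.smul_mulVec, Matrix.mulVec_smul]
      _ = V.mulVecLin (∑ j, (μ j • (φ j - φhat)) *ᵥ z) :=
          (map_sum V.mulVecLin _ Finset.univ).symm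
      _ = V.mulVecLin ((∑ j, μ j • (φ j - φhat)) *ᵥ z) := by rw [hA]
      _ = 0 := by rw [hm]; simp
  have hd0 : ∀ i, ∑ j, μ j * d j i = 0 := by
    intro i
    have := congrFun hsum i
    simpa [Finset.sum_apply] using this
  -- bounds on each candidate
  have hbdd : ∀ i : Fin nv, BddAbove (Set.range fun j => ((H j).mulVec α + d j) i) :=
    fun i => (Set.finite_range _).bddAbove
  have hαnn : ∀ i, |α i| ≤ γ := by
    intro i
    calc |α i| = ‖α i‖ := rfl
      _ ≤ ‖α‖ := norm_le_pi_norm α i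
      _ ≤ γ := hαγ
  have hHnorm : ∀ j, ‖H j‖ ≤ h := by
    intro j
    rw [hdef]
    exact le_ciSup (f := fun j => ‖H j‖) ((Set.finite_range _).bddAbove) j
  have hupper : ∀ j i, ((H j).mulVec α + d j) i ≤ γ := by
    intro j i
    have h1' : ((H j).mulVec α + d j) i ≤ ‖(H j).mulVec α‖ + ‖d j‖ := by
      have a1 : ((H j).mulVec α) i ≤ ‖(H j).mulVec α‖ :=
        le_trans (le_abs_self _)
          (by simpa [Real.norm_eq_abs] using norm_le_pi_norm ((H j).mulVec α) i)
      have a2 : (d j) i ≤ ‖d j‖ := le_trans (le_abs_self _)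
          (by simpa [Real.norm_eq_abs] using norm_le_pi_norm (d j) i)
      simpa [Pi.add_apply] using add_le_add a1 a2
    have h2' : ‖(H j).mulVec α‖ ≤ h * γ := by
      calc ‖(H j).mulVec α‖ ≤ ‖H j‖ * ‖α‖ := Matrix.linfty_opNorm_mulVec _ _
        _ ≤ h * γ := mul_le_mul (hHnorm j) hαγ (norm_nonneg _) (by
            linarith [norm_nonneg ((H j)), hHnorm j, (norm_nonneg (H j)).trans (hHnorm j)])
    have h3' : ‖d j‖ ≤ c := hcZ z hz j
    nlinarith
  have hαp_nonneg : ∀ i, 0 ≤ αp i := by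
    intro i
    rw [hαp i]
    have step : ∑ j, μ j * ((H j).mulVec α + d j) i ≤ ⨆ j, ((H j).mulVec α + d j) i := by
      calc ∑ j, μ j * ((H j).mulVec α + d j) i
          ≤ ∑ j, μ j * (⨆ j, ((H j).mulVec α + d j) i) := by
            refine Finset.sum_le_sum fun j _ => ?_
            exact mul_le_mul_of_nonneg_left (le_ciSup (hbdd i) j) (hμ_nonneg j)
        _ = ⨆ j, ((H j).mulVec α + d j) i := by
            rw [← Finset.sum_mul, hμ_sum, one_mul]
    refine le_trans ?_ step
    have : ∑ j, μ j * ((H j).mulVec α + d j) i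
        = ∑ j, μ j * ((H j).mulVec α) i + ∑ j, μ j * d j i := by
      rw [← Finset.sum_add_distrib]
      refine Finset.sum_congr rfl fun j _ => ?_
      simp [Pi.add_apply, mul_add]
    rw [this, hd0 i, add_zero]
    refine Finset.sum_nonneg fun j _ => mul_nonneg (hμ_nonneg j) ?_
    unfold Matrix.mulVec dotProduct
    exact Finset.sum_nonneg fun l _ => mul_nonneg (hH_nonneg j i l) (hα l)
  have hαp_upper : ∀ i, αp i ≤ γ := by
    intro i
    rw [hαp i]
    exact ciSup_le fun j => hupper j i
  constructor
  · intro i; exact hαp_nonneg i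
  · rw [pi_norm_le_iff_of_nonneg hγ0]
    intro i
    rw [Real.norm_eq_abs, abs_le]
    exact ⟨by linarith [hαp_nonneg i], hαp_upper i⟩
end
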